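/- Let K be a differential field of characteristic 0 with field of constants C, L|K a Picard-Vessiot extension, C̄ an algebraic closure of C, and L̄ = L·C̄, K̄ = K·C̄. If E is an intermediate differential field of L|K such that E|K is a Picard-Vessiot extension, then Ē = E·C̄ is a Picard-Vessiot extension of K̄. -/

import Mathlib

/-!
Common setup: differential fields realized as subfields of an ambient field `M`
of characteristic zero equipped with a derivation `D`.
-/

namespace PVGalois

variable {M : Type*} [Field M]

/-- `D` is a derivation on the field `M`. -/
structure IsDerivation (D : M → M) : Prop where
  map_add : ∀ a b : M, D (a + b) = D a + D b
  leibniz : ∀ a b : M, D (a * b) = a * D b + D a * b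

/-- A subfield `F` of `M` is a differential subfield if it is closed under `D`. -/
def DiffClosed (D : M → M) (F : Subfield M) : Prop :=
  ∀ x ∈ F, D x ∈ F

/-- The set of constants of the differential subfield `F`. -/
def constantsOf (D : M → M) (F : Subfield M) : Set M :=
  {x | x ∈ F ∧ D x = 0}

/-- `L` is differentially generated over `K` by the set `S`:
`L` is the smallest differential subfield containing `K` and `S`. -/
def IsDiffGenBy (D : M → M) (K : Subfield M) (S : Set M) (L : Subfield M) : Prop :=
  K ≤ L ∧ S ⊆ (L : Set M) ∧ DiffClosed D L ∧
    ∀ F : Subfield M, K ≤ F → S ⊆ (F : Set M) → DiffClosed D F → L ≤ F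

/-- `y` is a solution of the homogeneous linear differential equation
`Y⁽ⁿ⁾ + a_{n-1} Y⁽ⁿ⁻¹⁾ + ⋯ + a_1 Y' + a_0 Y = 0`. -/
def IsSolution (D : M → M) (n : ℕ) (a : Fin n → M) (y : M) : Prop :=
  D^[n] y + ∑ i : Fin n, a i * D^[(i : ℕ)] y = 0

/-- A family `v` is linearly independent over the set of scalars `A ⊆ M`. -/
def LinIndepOver {ι : Type*} (A : Set M) (v : ι → M) : Prop :=
  ∀ (s : Finset ι) (c : ι → M), (∀ i, c i ∈ A) →
    ∑ i ∈ s, c i * v i = 0 → ∀ i ∈ s, c i = 0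

/-- Every element of `T` is a finite linear combination of the family `v`
with coefficients in `A`. -/
def SpansOver {ι : Type*} (A : Set M) (v : ι → M) (T : Set M) : Prop :=
  ∀ x ∈ T, ∃ (s : Finset ι) (c : ι → M), (∀ i, c i ∈ A) ∧ x = ∑ i ∈ s, c i * v i

/-- `Cb` is an algebraic closure of the set `C` inside `M`:
it contains `C`, is algebraic over `C`, and is algebraically closed. -/
def IsAlgClosureOf (C : Set M) (Cb : Subfield M) : Prop :=
  C ⊆ (Cb : Set M) ∧
  (∀ x ∈ Cb, ∃ p : Polynomial M, p ≠ 0 ∧ (∀ k, p.coeff k ∈ C) ∧ p.eval x = 0) ∧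
  (∀ p : Polynomial M, 0 < p.degree → (∀ k, p.coeff k ∈ Cb) → ∃ x ∈ Cb, p.eval x = 0)

/-- `L|K` is a Picard-Vessiot extension for the equation with coefficients `a`,
with fundamental system of solutions `η`. -/
def IsPicardVessiotWith (D : M → M) (K L : Subfield M) (n : ℕ) (a : Fin n → M)
    (η : Fin n → M) : Prop :=
  (∀ i, a i ∈ K) ∧ (∀ j, IsSolution D n a (η j)) ∧
  LinIndepOver (constantsOf D L) η ∧
  IsDiffGenBy D K (Set.range η) L ∧
  constantsOf D L = constantsOf D K

/-- `L|K` is a Picard-Vessiot extension for the equation with coefficients `a`. -/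
def IsPicardVessiot (D : M → M) (K L : Subfield M) (n : ℕ) (a : Fin n → M) : Prop :=
  ∃ η : Fin n → M, IsPicardVessiotWith D K L n a η

/-- A `K`-differential morphism from `L` into `Lb`: a ring homomorphism defined on `L`
with values in `Lb`, fixing `K` pointwise and commuting with the derivation `D`. -/
def IsDiffHom (D : M → M) (K L Lb : Subfield M) (σ : ↥L →+* M) : Prop :=
  (∀ x, σ x ∈ Lb) ∧ (∀ x : ↥L, (x : M) ∈ K → σ x = (x : M)) ∧
  ∀ (x : M) (hx : x ∈ L) (hx' : D x ∈ L), σ ⟨D x, hx'⟩ = D (σ ⟨x, hx⟩)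

/-- A `Kb`-differential automorphism of `Lb`: a `Kb`-differential morphism of `Lb`
into itself which is onto `Lb`. -/
def IsDiffAut (D : M → M) (Kb Lb : Subfield M) (τ : ↥Lb →+* M) : Prop :=
  IsDiffHom D Kb Lb Lb τ ∧ ∀ y ∈ Lb, ∃ x : ↥Lb, τ x = y

end PVGalois

open PVGalois

/-!
The same fundamental system `η` generates `Ē` over `K̄`, so what has to be shown is that the
constants of `Ē` and of `K̄` are both `C̄`, and that `η` stays independent over them.

Elements of `C̄` are constants, being separable over constants. Conversely, a constant of `E·C̄`
is algebraic over `E`; differentiating the coefficients of a monic relation of least degree shows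
that it is algebraic over the constants `C` of `E`, hence lies in `C̄`.
For independence, a relation `∑ gᵢ η⁽ʲ⁾ᵢ = 0` (all `j`) over `E` of least support, normalised
to `g_{i₀} = 1`, has derivative a relation of smaller support, so its coefficients are constants;
thus the columns `(η⁽ʲ⁾ᵢ)ⱼ` are independent over `E`, hence over the ambient field, and a
relation over arbitrary constants is such a column relation.
-/

open Polynomial

theorem LinearIndependent.exists_finset_restrict {K ι κ : Type*} [Field K] [Finite ι]
    {v : ι → κ → K} (hv : LinearIndependent K v) :
    ∃ T : Finset κ, LinearIndependent K fun i (k : T) => v i k := by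
  classical
  cases nonempty_fintype ι
  let φ (k : κ) : (ι → K) →ₗ[K] K := (LinearMap.proj k).comp (Fintype.linearCombination K v)
  have hφ (k : κ) (g : ι → K) : φ k g = ∑ i, g i * v i k := by
    simp [φ, Fintype.linearCombination_apply]
  -- a minimal one among these subspaces of the finite-dimensional `ι → K` is the kernel of `v`
  let N (T : Finset κ) : Submodule K (ι → K) := ⨅ k ∈ T, LinearMap.ker (φ k)
  obtain ⟨_, ⟨T, rfl⟩, hT⟩ := IsArtinian.set_has_minimal (Set.range N) ⟨_, ∅, rfl⟩
  have hNT : N T = ⊥ := by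
    refine eq_bot_iff.2 fun g hg => ?_
    have hgk (k : κ) : φ k g = 0 := by
      have hle : N (insert k T) ≤ N T := biInf_mono fun _ => Finset.mem_insert_of_mem
      rw [← hle.eq_of_not_lt (hT _ ⟨_, rfl⟩)] at hg
      simp only [N, Submodule.mem_iInf, LinearMap.mem_ker] at hg
      exact hg k (Finset.mem_insert_self k T)
    exact funext fun i => Fintype.linearIndependent_iff.1 hv g (funext fun k => by
      simpa [hφ] using hgk k) i
  refine ⟨T, Fintype.linearIndependent_iff.2 fun g hg i => ?_⟩
  have hgT : g ∈ N T := by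
    simp only [N, Submodule.mem_iInf, LinearMap.mem_ker]
    intro k hk
    simpa [hφ] using congrFun hg ⟨k, hk⟩
  rw [hNT] at hgT
  exact congrFun hgT i

theorem LinearIndependent.algebraMap_comp_of_field {K L ι κ : Type*} [Field K] [Field L]
    [Algebra K L] [Finite ι] {v : ι → κ → K} (hv : LinearIndependent K v) :
    LinearIndependent L fun i => algebraMap K L ∘ v i := by
  obtain ⟨T, hT⟩ := hv.exists_finset_restrict
  exact (linearIndependent_algebraMap_comp_iff.2 hT).of_comp
    (LinearMap.funLeft L L ((↑) : T → κ))

namespace PVGalois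

variable {M : Type*} [Field M] {D : M → M}

namespace IsDerivation

def toDerivation (hD : IsDerivation D) : Derivation ℤ M M :=
  Derivation.mk' (AddMonoidHom.mk' D hD.map_add).toIntLinearMap fun a b => by
    simp [hD.leibniz, mul_comm]

lemma map_zero (hD : IsDerivation D) : D 0 = 0 := _root_.map_zero hD.toDerivation

lemma map_one (hD : IsDerivation D) : D 1 = 0 := hD.toDerivation.map_one_eq_zero

lemma map_neg (hD : IsDerivation D) (x : M) : D (-x) = -D x := _root_.map_neg hD.toDerivation x

lemma map_natCast (hD : IsDerivation D) (n : ℕ) : D n = 0 := hD.toDerivation.map_natCast n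

lemma map_sum (hD : IsDerivation D) {ι : Type*} (s : Finset ι) (f : ι → M) :
    D (∑ i ∈ s, f i) = ∑ i ∈ s, D (f i) :=
  _root_.map_sum hD.toDerivation f s

lemma leibniz_inv (hD : IsDerivation D) (x : M) : D x⁻¹ = -x⁻¹ ^ 2 * D x :=
  hD.toDerivation.leibniz_inv x

abbrev toDifferential (hD : IsDerivation D) : Differential M := ⟨hD.toDerivation⟩

noncomputable def mapCoeffs (hD : IsDerivation D) (p : M[X]) : M[X] :=
  @Differential.mapCoeffs M _ hD.toDifferential p

@[simp]
lemma coeff_mapCoeffs (hD : IsDerivation D) (p : M[X]) (k : ℕ) :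
    (hD.mapCoeffs p).coeff k = D (p.coeff k) :=
  rfl

lemma apply_eval (hD : IsDerivation D) (p : M[X]) (x : M) :
    D (p.eval x) = (hD.mapCoeffs p).eval x + (derivative p).eval x * D x := by
  let := hD.toDifferential
  have h := Differential.deriv_aeval_eq x p
  simp only [coe_aeval_eq_eval] at h
  exact h

lemma mapCoeffs_eq_zero (hD : IsDerivation D) {p : M[X]} :
    hD.mapCoeffs p = 0 ↔ ∀ k, D (p.coeff k) = 0 := by
  simp [Polynomial.ext_iff]

end IsDerivation

lemma iterate_mem {F : Subfield M} (hF : DiffClosed D F) {x : M} (hx : x ∈ F) (j : ℕ) :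
    D^[j] x ∈ F := by
  induction j with
  | zero => exact hx
  | succ j ih => rw [Function.iterate_succ_apply']; exact hF _ ih

lemma iterate_sum_mul_of_deriv_eq_zero (hD : IsDerivation D) {ι : Type*} (s : Finset ι)
    {c : ι → M} (hc : ∀ i, D (c i) = 0) (y : ι → M) (j : ℕ) :
    D^[j] (∑ i ∈ s, c i * y i) = ∑ i ∈ s, c i * D^[j] (y i) := by
  induction j with
  | zero => rfl
  | succ j ih =>
    simp only [Function.iterate_succ_apply', ih, hD.map_sum, hD.leibniz, hc, zero_mul, add_zero]

lemma diffClosed_closure (hD : IsDerivation D) {S : Set M}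
    (hS : ∀ x ∈ S, D x ∈ Subfield.closure S) : DiffClosed D (Subfield.closure S) := by
  intro x hx
  induction hx using Subfield.closure_induction with
  | mem x hx => exact hS x hx
  | one => rw [hD.map_one]; exact zero_mem _
  | add x y _ _ hx hy => rw [hD.map_add]; exact add_mem hx hy
  | neg x _ hx => rw [hD.map_neg]; exact neg_mem hx
  | inv x hx' hx =>
    rw [hD.leibniz_inv]; exact mul_mem (neg_mem (pow_mem (inv_mem hx') 2)) hx
  | mul x y hx' hy' hx hy =>
    rw [hD.leibniz]; exact add_mem (mul_mem hx' hy) (mul_mem hx hy')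

lemma DiffClosed.sup (hD : IsDerivation D) {F G : Subfield M} (hF : DiffClosed D F)
    (hG : DiffClosed D G) : DiffClosed D (F ⊔ G) := by
  have hFG : F ⊔ G = Subfield.closure (F ∪ G) := by
    rw [Subfield.closure_union, Subfield.closure_eq, Subfield.closure_eq]
  rw [hFG]
  refine diffClosed_closure hD fun x hx => Subfield.subset_closure ?_
  rcases hx with hx | hx
  exacts [Or.inl (hF x hx), Or.inr (hG x hx)]

lemma IsDiffGenBy.sup (hD : IsDerivation D) {K L G : Subfield M} {S : Set M}
    (h : IsDiffGenBy D K S L) (hG : DiffClosed D G) : IsDiffGenBy D (K ⊔ G) S (L ⊔ G) := by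
  obtain ⟨hKL, hSL, hL, hmin⟩ := h
  refine ⟨sup_le_sup_right hKL G, hSL.trans (le_sup_left : L ≤ L ⊔ G), hL.sup hD hG,
    fun F hKF hSF hF => ?_⟩
  exact sup_le (hmin F (le_sup_left.trans hKF) hSF hF) (le_sup_right.trans hKF)

def IsAlgebraicOver (S : Set M) (x : M) : Prop :=
  ∃ p : M[X], p ≠ 0 ∧ (∀ k, p.coeff k ∈ S) ∧ p.eval x = 0

lemma IsAlgebraicOver.mono {S T : Set M} (hST : S ⊆ T) {x : M} (h : IsAlgebraicOver S x) :
    IsAlgebraicOver T x :=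
  let ⟨p, hp0, hpS, hpx⟩ := h
  ⟨p, hp0, fun k => hST (hpS k), hpx⟩

lemma isAlgebraicOver_iff_isAlgebraic (F : Subfield M) {x : M} :
    IsAlgebraicOver F x ↔ IsAlgebraic F x := by
  constructor
  · rintro ⟨p, hp0, hpF, hpx⟩
    obtain ⟨P, rfl⟩ := (mem_lifts p).1 <|
      (lifts_iff_coeff_lifts (f := algebraMap F M) p).2 fun k => ⟨⟨_, hpF k⟩, rfl⟩
    exact ⟨P, fun h => hp0 (by simp [h]), by rwa [aeval_def, eval₂_eq_eval_map]⟩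
  · rintro ⟨P, hP0, hPx⟩
    refine ⟨P.map (algebraMap F M),
      (Polynomial.map_ne_zero_iff (algebraMap F M).injective).2 hP0, fun k => ?_,
      by rwa [aeval_def, eval₂_eq_eval_map] at hPx⟩
    rw [coeff_map]
    exact (P.coeff k).2

lemma IsAlgebraicOver.of_mem_sup {F G : Subfield M} (hG : ∀ c ∈ G, IsAlgebraicOver F c) {x : M}
    (hx : x ∈ F ⊔ G) : IsAlgebraicOver F x := by
  let T := IntermediateField.adjoin F (G : Set M)
  have : Algebra.IsAlgebraic F T := IntermediateField.isAlgebraic_adjoin fun c hc =>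
    ((isAlgebraicOver_iff_isAlgebraic F).1 (hG c hc)).isIntegral
  have hFG : F ⊔ G ≤ T.toSubfield :=
    sup_le (fun y hy => T.algebraMap_mem ⟨y, hy⟩) (IntermediateField.subset_adjoin F _)
  exact (isAlgebraicOver_iff_isAlgebraic F).2 <|
    IntermediateField.isAlgebraic_iff.1 (Algebra.IsAlgebraic.isAlgebraic (⟨x, hFG hx⟩ : T))

lemma isAlgClosed_of_exists_root {Cb : Subfield M}
    (h : ∀ p : M[X], 0 < p.degree → (∀ k, p.coeff k ∈ Cb) → ∃ x ∈ Cb, p.eval x = 0) :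
    IsAlgClosed Cb := by
  refine IsAlgClosed.of_exists_root _ fun P _ hP => ?_
  obtain ⟨x, hx, hPx⟩ := h (P.map Cb.subtype)
    (by rw [degree_map]; exact degree_pos_of_irreducible hP)
    fun k => by rw [coeff_map]; exact (P.coeff k).2
  refine ⟨⟨x, hx⟩, Cb.subtype.injective ?_⟩
  rwa [_root_.map_zero, ← eval₂_at_apply, ← eval_map]

lemma IsAlgebraicOver.mem_of_isAlgClosed {Cb : Subfield M} [IsAlgClosed Cb] {x : M}
    (h : IsAlgebraicOver Cb x) : x ∈ Cb := by
  have hx := ((isAlgebraicOver_iff_isAlgebraic Cb).1 h).isIntegral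
  obtain ⟨y, rfl⟩ := minpoly.mem_range_of_degree_eq_one Cb x
    (IsAlgClosed.degree_eq_one_of_irreducible Cb (minpoly.irreducible hx))
  exact y.2

theorem deriv_eq_zero_of_isAlgebraicOver [CharZero M] (hD : IsDerivation D) {x : M}
    (h : IsAlgebraicOver {y | D y = 0} x) : D x = 0 := by
  obtain ⟨p, hp0, hpc, hpx⟩ := h
  induction hn : p.natDegree using Nat.strong_induction_on generalizing p with
  | _ n ih =>
  -- `0 = D (p x) = p'(x) * D x`; if `p'(x) = 0`, pass to `p'`, nonzero in characteristic zero
  by_cases hp' : (derivative p).eval x = 0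
  · have hdeg : p.natDegree ≠ 0 := fun h0 => by
      rw [eq_C_of_natDegree_eq_zero h0, eval_C] at hpx
      exact hp0 (by rw [eq_C_of_natDegree_eq_zero h0, hpx, C_0])
    refine ih _ (hn ▸ natDegree_derivative_lt hdeg) _ (derivative_ne_zero.2 hdeg) (fun k => ?_)
      hp' rfl
    have hk : D (k + 1 : M) = 0 := by exact_mod_cast hD.map_natCast (k + 1)
    show D ((derivative p).coeff k) = 0
    rw [coeff_derivative, hD.leibniz, hk, show D (p.coeff (k + 1)) = 0 from hpc (k + 1)]
    ring
  · have h := hD.apply_eval p x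
    rw [hpx, hD.map_zero, hD.mapCoeffs_eq_zero.2 hpc, eval_zero, zero_add] at h
    exact (mul_eq_zero.1 h.symm).resolve_left hp'

theorem IsAlgebraicOver.constantsOf (hD : IsDerivation D) {F : Subfield M} (hF : DiffClosed D F)
    {x : M} (hDx : D x = 0) (h : IsAlgebraicOver F x) : IsAlgebraicOver (constantsOf D F) x := by
  obtain ⟨p, hp0, hpF, hpx⟩ := h
  induction hn : p.natDegree using Nat.strong_induction_on generalizing p with
  | _ n ih =>
  set q := p * C p.leadingCoeff⁻¹
  have hq : q.Monic := monic_mul_leadingCoeff_inv hp0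
  have hqn : q.natDegree = n := by rw [natDegree_mul_leadingCoeff_inv _ hp0, hn]
  have hqF (k : ℕ) : q.coeff k ∈ F := by
    rw [coeff_mul_C]; exact mul_mem (hpF k) (inv_mem (hpF _))
  have hqx : q.eval x = 0 := by simp [q, hpx]
  have hrx : (hD.mapCoeffs q).eval x = 0 := by
    have h := hD.apply_eval q x
    rwa [hqx, hD.map_zero, hDx, mul_zero, add_zero, eq_comm] at h
  by_cases hr0 : hD.mapCoeffs q = 0
  · exact ⟨q, hq.ne_zero, fun k => ⟨hqF k, hD.mapCoeffs_eq_zero.1 hr0 k⟩, hqx⟩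
  refine ih _ ?_ _ hr0 (fun k => hF _ (hqF k)) hrx rfl
  by_contra! hle
  refine leadingCoeff_ne_zero.2 hr0 ?_
  rw [leadingCoeff, IsDerivation.coeff_mapCoeffs]
  rcases (hqn ▸ hle).eq_or_lt with h | h
  · rw [← h, hq.coeff_natDegree, hD.map_one]
  · rw [coeff_eq_zero_of_natDegree_lt h, hD.map_zero]

lemma IsAlgClosureOf.isAlgebraicOver {C : Set M} {Cb : Subfield M} (hCb : IsAlgClosureOf C Cb)
    {c : M} (hc : c ∈ Cb) : IsAlgebraicOver C c :=
  hCb.2.1 c hc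

lemma IsAlgClosureOf.deriv_eq_zero [CharZero M] (hD : IsDerivation D) {K Cb : Subfield M}
    (hCb : IsAlgClosureOf (constantsOf D K) Cb) {c : M} (hc : c ∈ Cb) : D c = 0 :=
  deriv_eq_zero_of_isAlgebraicOver hD <| (hCb.isAlgebraicOver hc).mono fun _ hy => hy.2

lemma IsAlgClosureOf.diffClosed [CharZero M] (hD : IsDerivation D) {K Cb : Subfield M}
    (hCb : IsAlgClosureOf (constantsOf D K) Cb) : DiffClosed D Cb := fun c hc => by
  rw [hCb.deriv_eq_zero hD hc]; exact zero_mem Cb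

theorem constantsOf_sup_eq [CharZero M] (hD : IsDerivation D) {F Cb : Subfield M}
    (hF : DiffClosed D F) (hCb : IsAlgClosureOf (constantsOf D F) Cb) :
    constantsOf D (F ⊔ Cb) = Cb := by
  have := isAlgClosed_of_exists_root hCb.2.2
  ext x
  refine ⟨fun ⟨hx, hDx⟩ => ?_, fun hx => ⟨le_sup_right (a := F) hx, hCb.deriv_eq_zero hD hx⟩⟩
  have hxF : IsAlgebraicOver F x :=
    .of_mem_sup (fun c hc => (hCb.isAlgebraicOver hc).mono fun _ hy => hy.1) hx
  exact ((hxF.constantsOf hD hF hDx).mono hCb.1).mem_of_isAlgClosed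

lemma LinIndepOver.mono {ι : Type*} {A B : Set M} {v : ι → M} (hAB : A ⊆ B)
    (h : LinIndepOver B v) : LinIndepOver A v :=
  fun s c hc => h s c fun i => hAB (hc i)

theorem eq_zero_of_forall_sum_mul_iterate_eq_zero (hD : IsDerivation D) {F : Subfield M}
    (hF : DiffClosed D F) {ι : Type*} [Fintype ι] {η : ι → M}
    (hη : LinIndepOver (constantsOf D F) η) {g : ι → M} (hgF : ∀ i, g i ∈ F)
    (hg : ∀ j, ∑ i, g i * D^[j] (η i) = 0) : g = 0 := by
  classical
  induction hn : (Finset.univ.filter fun i => g i ≠ 0).card using Nat.strong_induction_on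
    generalizing g with
  | _ n ih =>
  by_contra hne
  obtain ⟨i₀, hi₀⟩ := Function.ne_iff.1 hne
  set h : ι → M := fun i => g i / g i₀
  have hhF (i : ι) : h i ∈ F := div_mem (hgF i) (hgF i₀)
  have hh (j : ℕ) : ∑ i, h i * D^[j] (η i) = 0 := by
    simp_rw [h, div_mul_eq_mul_div, ← Finset.sum_div, hg j, zero_div]
  have hDh (j : ℕ) : ∑ i, D (h i) * D^[j] (η i) = 0 := by
    have hD0 := congrArg D (hh j)
    rw [hD.map_sum, hD.map_zero, Finset.sum_congr rfl fun i _ => hD.leibniz _ _,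
      Finset.sum_add_distrib] at hD0
    simpa only [← Function.iterate_succ_apply' D, hh, zero_add] using hD0
  have hDh0 : (fun i => D (h i)) = 0 := by
    refine ih _ ?_ (fun i => hF _ (hhF i)) hDh rfl
    rw [← hn]
    refine Finset.card_lt_card <| (Finset.ssubset_iff_of_subset fun i => ?_).2 ⟨i₀, ?_, ?_⟩
    · simp only [Finset.mem_filter, Finset.mem_univ, true_and]
      intro hDi hgi
      simp [h, hgi, hD.map_zero] at hDi
    · simpa using hi₀
    · simp [h, div_self hi₀, hD.map_one]
  have h0 := hη Finset.univ h (fun i => ⟨hhF i, congrFun hDh0 i⟩) (by simpa using hh 0) i₀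
    (Finset.mem_univ _)
  simp [h, div_self hi₀] at h0

theorem LinIndepOver.of_constantsOf (hD : IsDerivation D) {F : Subfield M} (hF : DiffClosed D F)
    {ι : Type*} [Finite ι] {η : ι → M} (hηF : ∀ i, η i ∈ F)
    (hη : LinIndepOver (constantsOf D F) η) : LinIndepOver {x | D x = 0} η := by
  cases nonempty_fintype ι
  let v (i : ι) (j : ℕ) : F := ⟨D^[j] (η i), iterate_mem hF (hηF i) j⟩
  have hv : LinearIndependent F v := Fintype.linearIndependent_iff.2 fun g hg => by
    have hg0 := eq_zero_of_forall_sum_mul_iterate_eq_zero hD hF hη (g := fun i => g i)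
      (fun i => (g i).2) fun j => by simpa [v] using congrArg Subtype.val (congrFun hg j)
    exact fun i => Subtype.ext (congrFun hg0 i)
  intro s c hc hsum
  refine linearIndependent_iff'.1 (hv.algebraMap_comp_of_field (L := M)) s c
    (funext fun j => ?_)
  have hsumj := congrArg D^[j] hsum
  rw [iterate_sum_mul_of_deriv_eq_zero hD s hc, Function.iterate_fixed hD.map_zero] at hsumj
  simp only [Finset.sum_apply, Pi.smul_apply, Function.comp_apply, smul_eq_mul, Pi.zero_apply]
  exact hsumj

end PVGalois

theorem statement_14_general {M : Type*} [Field M] [CharZero M] (D : M → M) (hD : IsDerivation D)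
    (K : Subfield M) (hKdc : DiffClosed D K)
    (Cb : Subfield M) (hCb : IsAlgClosureOf (constantsOf D K) Cb)
    (E : Subfield M)
    (m : ℕ) (b : Fin m → M) (hPVE : IsPicardVessiot D K E m b) :
    IsPicardVessiot D (K ⊔ Cb) (E ⊔ Cb) m b := by
  obtain ⟨η, hbK, hsol, hlin, hgen, hCE⟩ := hPVE
  have hEdc : DiffClosed D E := hgen.2.2.1
  have hCbE : IsAlgClosureOf (constantsOf D E) Cb := hCE ▸ hCb
  refine ⟨η, fun i => le_sup_left (a := K) (hbK i), hsol, ?_,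
    hgen.sup hD (hCb.diffClosed hD), ?_⟩
  · exact (hlin.of_constantsOf hD hEdc fun i => hgen.2.1 ⟨i, rfl⟩).mono fun x hx => hx.2
  · rw [constantsOf_sup_eq hD hEdc hCbE, constantsOf_sup_eq hD hKdc hCb]

/-- Let `L|K` be Picard-Vessiot, `Cb` an algebraic closure of the
constants `C` of `K`, and `E` an intermediate differential field such that `E|K` is a
Picard-Vessiot extension.  Then `Ē = E ⊔ Cb` is a Picard-Vessiot extension of
`K̄ = K ⊔ Cb`. -/
theorem statement_14 {M : Type*} [Field M] [CharZero M] (D : M → M) (hD : IsDerivation D)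
    (K L : Subfield M) (hKdc : DiffClosed D K) (hKL : K ≤ L)
    (n : ℕ) (a : Fin n → M) (hPV : IsPicardVessiot D K L n a)
    (Cb : Subfield M) (hCb : IsAlgClosureOf (constantsOf D K) Cb)
    (E : Subfield M) (hKE : K ≤ E) (hEL : E ≤ L) (hEdc : DiffClosed D E)
    (m : ℕ) (b : Fin m → M) (hPVE : IsPicardVessiot D K E m b) :
    IsPicardVessiot D (K ⊔ Cb) (E ⊔ Cb) m b :=
  statement_14_general D hD K hKdc Cb hCb E m b hPVE
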